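/- arXiv:1301.5833 — 4 statements merged into one kernel-verified Lean document; each statement's English description precedes it below -/
import Mathlib

section
/- Let gl̃ᵉ_∞ = E ⊗ C((t)) ⊕ C k, where E has basis {e_m | m ∈ Z} and k is a central element, with bracket defined on generators (in terms of generating functions B_t(m,x) = Σ_{n∈Z} (e_m ⊗ t^n) x^{-n-1}) by [B_t(m,x₁), B_t(n,x₂)] = e^{(m-n)(x₁-x₂)} ( B_t(m,x₂) - B_t(n,x₁) + f(m,n) k ). Then this bracket is well-defined, bilinear, skew-symmetric, and satisfies the Jacobi identity, so gl̃ᵉ_∞ is a Lie algebra. -/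
noncomputable section

/-- `f m n = 1` if `m ≤ 0` and `n ≥ 1`, `f m n = -1` if `n ≤ 0` and `m ≥ 1`, else `0`. -/
def f (m n : ℤ) : ℤ :=
  if m ≤ 0 ∧ 1 ≤ n then 1 else if n ≤ 0 ∧ 1 ≤ m then -1 else 0

/-- The formal exponential series `e^{c x} = Σ_{n≥0} c^n x^n / n!`, as a Laurent series. -/
def expS (c : ℤ) : LaurentSeries ℂ :=
  HahnSeries.ofPowerSeries ℤ ℂ (PowerSeries.mk fun n => (c : ℂ) ^ n / n.factorial)

/-- The formal residue: the coefficient of `x^{-1}`. -/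
def Res (g : LaurentSeries ℂ) : ℂ := g.coeff (-1)

/-- The underlying space of `gl̃ᵉ_∞ = E ⊗ ℂ((t)) ⊕ ℂ k`, where `E` has basis
`{e_m | m ∈ ℤ}`: finitely supported families of Laurent series, plus a central line. -/
abbrev V : Type := (ℤ →₀ LaurentSeries ℂ) × ℂ

/-- `e_m ⊗ g(t)`, as an element of `gl̃ᵉ_∞`. -/
def gen (m : ℤ) (g : LaurentSeries ℂ) : V := (Finsupp.single m g, 0)

/-- The central element `k`. -/
def K : V := (0, 1)

/-- The bracket of `gl̃ᵉ_∞`, determined by the residue formula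
`[e_m ⊗ g, e_n ⊗ h] = Res_{x₁} Res_{x₂} g(x₁) h(x₂) e^{(m-n)(x₁-x₂)}
(B_t(m,x₂) - B_t(n,x₁) + f(m,n) k)`, i.e.
`[e_m ⊗ g, e_n ⊗ h] = Res(e^{(m-n)x} g) · e_m ⊗ e^{(n-m)t} h
  - Res(e^{(n-m)x} h) · e_n ⊗ e^{(m-n)t} g + Res(e^{(m-n)x} g) Res(e^{(n-m)x} h) f(m,n) k`,
with `k` central. -/
def br (a b : V) : V :=
  a.1.sum fun m g => b.1.sum fun n h =>
    (Res (expS (m - n) * g) • Finsupp.single m (expS (n - m) * h)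
       - Res (expS (n - m) * h) • Finsupp.single n (expS (m - n) * g),
     Res (expS (m - n) * g) * Res (expS (n - m) * h) * (f m n : ℂ))

/-! The bracket is a double `Finsupp` sum of a bracket `genBr` of pure tensors `e_m ⊗ g`, which
is linear in each tensor factor; hence `br` is bilinear, and skew-symmetry and the Jacobi identity
reduce to pure tensors and the central element `k`, which brackets to zero with everything.
On pure tensors two facts make the identities hold: `e^{ax} e^{bx} = e^{(a+b)x}`, so the
exponential factors of nested brackets telescope, and `f m n = step n - step m` with `step` the
indicator of `1 ≤ m`, so the central term is a coboundary and cancels in the Jacobi sum. -/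

lemma expS_mul_expS (c d : ℤ) : expS c * expS d = expS (c + d) := by
  have expS_eq (c : ℤ) : expS c =
      HahnSeries.ofPowerSeries ℤ ℂ (PowerSeries.rescale (c : ℂ) (PowerSeries.exp ℂ)) := by
    unfold expS
    congr 1
    ext n
    simp [PowerSeries.coeff_rescale, PowerSeries.coeff_exp, div_eq_mul_inv]
  rw [expS_eq, expS_eq, expS_eq, ← map_mul, PowerSeries.exp_mul_exp_eq_exp_add, Int.cast_add]

lemma expS_sub_mul_expS_sub_mul (x y z : ℤ) (q : LaurentSeries ℂ) :
    expS (x - y) * (expS (z - x) * q) = expS (z - y) * q := by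
  rw [← mul_assoc, expS_mul_expS, sub_add_sub_cancel']

lemma Res_add (a b : LaurentSeries ℂ) : Res (a + b) = Res a + Res b := by simp [Res]

lemma Res_smul (c : ℂ) (a : LaurentSeries ℂ) : Res (c • a) = c * Res a := by simp [Res]

-- Instance search finds no `SMulCommClass ℂ ℂ((x)) ℂ((x))`, so `mul_smul_comm` cannot be used.
lemma LaurentSeries.mul_smul_comm' (c : ℂ) (q r : LaurentSeries ℂ) :
    q * (c • r) = c • (q * r) := by
  rw [← HahnSeries.C_mul_eq_smul, ← HahnSeries.C_mul_eq_smul, mul_left_comm]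

def step (m : ℤ) : ℂ := if 1 ≤ m then 1 else 0

lemma f_eq_step_sub_step (m n : ℤ) : (f m n : ℂ) = step n - step m := by
  unfold f step
  split_ifs <;> first | omega | norm_num

def genBr (m : ℤ) (g : LaurentSeries ℂ) (n : ℤ) (h : LaurentSeries ℂ) : V :=
  (Res (expS (m - n) * g) • Finsupp.single m (expS (n - m) * h)
     - Res (expS (n - m) * h) • Finsupp.single n (expS (m - n) * g),
   Res (expS (m - n) * g) * Res (expS (n - m) * h) * (f m n : ℂ))

lemma br_eq_sum (a b : V) : br a b = a.1.sum fun m g => b.1.sum (genBr m g) := rfl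

section genBr

variable (m n : ℤ) (g g' h h' : LaurentSeries ℂ) (c : ℂ)

lemma genBr_add_left : genBr m (g + g') n h = genBr m g n h + genBr m g' n h := by
  simp only [genBr, mul_add, Res_add, Finsupp.single_add]
  refine Prod.ext ?_ ?_ <;> dsimp only [Prod.fst_add, Prod.snd_add]
  · module
  · ring

lemma genBr_add_right : genBr m g n (h + h') = genBr m g n h + genBr m g n h' := by
  simp only [genBr, mul_add, Res_add, Finsupp.single_add]
  refine Prod.ext ?_ ?_ <;> dsimp only [Prod.fst_add, Prod.snd_add]
  · module
  · ring

lemma genBr_smul_left : genBr m (c • g) n h = c • genBr m g n h := by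
  simp only [genBr, LaurentSeries.mul_smul_comm', Res_smul, ← Finsupp.smul_single]
  refine Prod.ext ?_ ?_ <;> dsimp only [Prod.smul_fst, Prod.smul_snd]
  · module
  · ring

lemma genBr_smul_right : genBr m g n (c • h) = c • genBr m g n h := by
  simp only [genBr, LaurentSeries.mul_smul_comm', Res_smul, ← Finsupp.smul_single]
  refine Prod.ext ?_ ?_ <;> dsimp only [Prod.smul_fst, Prod.smul_snd]
  · module
  · ring

lemma genBr_zero_left : genBr m 0 n h = 0 := by
  rw [← smul_zero (0 : ℂ), genBr_smul_left]
  exact zero_smul ℂ (genBr m 0 n h)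

lemma genBr_zero_right : genBr m g n 0 = 0 := by
  rw [← smul_zero (0 : ℂ), genBr_smul_right]
  exact zero_smul ℂ (genBr m g n 0)

end genBr

/- `HahnSeries.instZero` agrees with the zero of the additive group structure only after
unfolding, so `simp` and `rw` cannot apply generic module lemmas to the `ℂ`-action on `V` as it
appears in `br`; such steps go through term-mode application, `abel` and `module` instead. -/
section bilinear

variable (s : ℂ) (a b c : V)

lemma sum_genBr_zero_left (m : ℤ) (w : ℤ →₀ LaurentSeries ℂ) : w.sum (genBr m 0) = 0 :=
  Finset.sum_eq_zero fun n _ => genBr_zero_left m n _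

lemma br_add_left : br (a + b) c = br a c + br b c :=
  Finsupp.sum_add_index' (fun m => sum_genBr_zero_left m c.1)
    fun m g g' =>
      (Finsupp.sum_congr fun n _ => genBr_add_left m n g g' _).trans Finsupp.sum_add

lemma br_add_right : br a (b + c) = br a b + br a c := by
  rw [br_eq_sum, br_eq_sum, br_eq_sum, ← Finsupp.sum_add]
  refine Finsupp.sum_congr fun m _ => ?_
  exact Finsupp.sum_add_index' (genBr_zero_right m · _) (genBr_add_right m · _)

lemma smul_finsupp_sum (w : ℤ →₀ LaurentSeries ℂ) (F : ℤ → LaurentSeries ℂ → V) :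
    s • w.sum F = w.sum fun n h => s • F n h :=
  Finsupp.smul_sum (v := w) (c := s) (h := F)

lemma br_smul_left : br (s • a) b = s • br a b := by
  rw [br_eq_sum, br_eq_sum, Prod.smul_fst, smul_finsupp_sum,
    Finsupp.sum_smul_index' fun m => sum_genBr_zero_left m b.1]
  refine Finsupp.sum_congr fun m _ => ?_
  rw [smul_finsupp_sum]
  refine Finsupp.sum_congr fun n _ => ?_
  rw [genBr_smul_left]

lemma br_smul_right : br a (s • b) = s • br a b := by
  rw [br_eq_sum, br_eq_sum, smul_finsupp_sum]
  refine Finsupp.sum_congr fun m _ => ?_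
  rw [Prod.smul_fst, Finsupp.sum_smul_index' (genBr_zero_right m · _), smul_finsupp_sum]
  refine Finsupp.sum_congr fun n _ => ?_
  rw [genBr_smul_right]

end bilinear

lemma br_eq_zero_of_fst_eq_zero_left {a : V} (ha : a.1 = 0) (b : V) : br a b = 0 := by
  rw [br_eq_sum, ha, Finsupp.sum_zero_index]

lemma br_eq_zero_of_fst_eq_zero_right (a : V) {b : V} (hb : b.1 = 0) : br a b = 0 := by
  rw [br_eq_sum, hb]
  exact Finset.sum_eq_zero fun m _ => Finsupp.sum_zero_index

lemma br_gen_gen (m n : ℤ) (g h : LaurentSeries ℂ) :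
    br (gen m g) (gen n h) = Res (expS (m - n) * g) • gen m (expS (n - m) * h)
      + (-Res (expS (n - m) * h)) • gen n (expS (m - n) * g)
      + (Res (expS (m - n) * g) * Res (expS (n - m) * h) * f m n) • K := by
  rw [br_eq_sum, gen, gen, Finsupp.sum_single_index (sum_genBr_zero_left m _),
    Finsupp.sum_single_index (genBr_zero_right m n g)]
  refine Prod.ext ?_ ?_
  · simp only [genBr, gen, K, Prod.fst_add, Prod.smul_fst]
    module
  · simp only [genBr, gen, K, Prod.snd_add, Prod.smul_snd, smul_eq_mul]
    ring

lemma br_K_left (a : V) : br K a = 0 := br_eq_zero_of_fst_eq_zero_left rfl a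

lemma br_K_right (a : V) : br a K = 0 := br_eq_zero_of_fst_eq_zero_right a rfl

lemma br_zero_left (a : V) : br 0 a = 0 := br_eq_zero_of_fst_eq_zero_left rfl a

lemma br_zero_right (a : V) : br a 0 = 0 := br_eq_zero_of_fst_eq_zero_right a rfl

theorem V.induction {P : V → Prop} (ofGen : ∀ m g, P (gen m g)) (central : P K)
    (add : ∀ a b, P a → P b → P (a + b)) (smul : ∀ (s : ℂ) a, P a → P (s • a))
    (a : V) : P a := by
  have decomp : a = (a.1.sum fun m g => gen m g) + a.2 • K := by
    refine Prod.ext ?_ ?_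
    · simp only [Prod.fst_add, Prod.smul_fst, Finsupp.sum, Prod.fst_sum, gen, K]
      rw [smul_zero]
      exact (Finsupp.sum_single a.1).symm.trans (add_zero _).symm
    · simp [gen, K, Finsupp.sum, Prod.snd_sum]
  have zero : P 0 := zero_smul ℂ K ▸ smul 0 K central
  rw [decomp]
  exact add _ _ (Finset.sum_induction _ P add zero fun m _ => ofGen m _) (smul _ _ central)

lemma br_skew_gen (m n : ℤ) (g h : LaurentSeries ℂ) :
    br (gen m g) (gen n h) = -br (gen n h) (gen m g) := by
  rw [br_gen_gen, br_gen_gen, f_eq_step_sub_step, f_eq_step_sub_step]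
  module

lemma br_jacobi_gen (l m n : ℤ) (g h p : LaurentSeries ℂ) :
    br (gen l g) (br (gen m h) (gen n p))
      = br (br (gen l g) (gen m h)) (gen n p) + br (gen m h) (br (gen l g) (gen n p)) := by
  simp only [br_gen_gen, br_add_left, br_add_right, br_smul_left, br_smul_right,
    br_K_left, br_K_right, expS_sub_mul_expS_sub_mul, f_eq_step_sub_step]
  module

theorem br_skew (a b : V) : br a b = -br b a := by
  induction a using V.induction generalizing b with
  | ofGen m g =>
    induction b using V.induction with
    | ofGen n h => exact br_skew_gen m n g h
    | central => rw [br_K_right, br_K_left]; abel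
    | add x y hx hy => rw [br_add_left, br_add_right, hx, hy]; abel
    | smul s x hx => rw [br_smul_left, br_smul_right, hx]; module
  | central => rw [br_K_right, br_K_left]; abel
  | add x y hx hy => rw [br_add_left, br_add_right, hx, hy]; abel
  | smul s x hx => rw [br_smul_left, br_smul_right, hx]; module

theorem br_jacobi (a b c : V) : br a (br b c) = br (br a b) c + br b (br a c) := by
  induction a using V.induction generalizing b c with
  | ofGen l g =>
    induction b using V.induction generalizing c with
    | ofGen m h =>
      induction c using V.induction with
      | ofGen n p => exact br_jacobi_gen l m n g h p
      | central => simp only [br_K_right, br_zero_right]; abel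
      | add x y hx hy => simp only [br_add_right, hx, hy]; abel
      | smul s x hx => simp only [br_smul_right, hx]; module
    | central => simp only [br_K_left, br_K_right, br_zero_left, br_zero_right]; abel
    | add x y hx hy => simp only [br_add_left, br_add_right, hx, hy]; abel
    | smul s x hx => simp only [br_smul_left, br_smul_right, hx]; module
  | central => simp only [br_K_left, br_zero_left, br_zero_right]; abel
  | add x y hx hy => simp only [br_add_left, br_add_right, hx, hy]; abel
  | smul s x hx => simp only [br_smul_left, br_smul_right, hx]; module

/-- The bracket on `gl̃ᵉ_∞ = E ⊗ ℂ((t)) ⊕ ℂ k` is well defined, bilinear, skew-symmetric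
and satisfies the Jacobi (Leibniz) identity, so `gl̃ᵉ_∞` is a Lie algebra. -/
theorem glTildeE_is_Lie_algebra :
    (∀ a b c : V, br (a + b) c = br a c + br b c) ∧
    (∀ a b c : V, br a (b + c) = br a b + br a c) ∧
    (∀ (s : ℂ) (a b : V), br (s • a) b = s • br a b) ∧
    (∀ (s : ℂ) (a b : V), br a (s • b) = s • br a b) ∧
    (∀ a b : V, br a b = - br b a) ∧
    (∀ a b c : V, br a (br b c) = br (br a b) c + br b (br a c)) :=
  ⟨br_add_left, br_add_right, br_smul_left, br_smul_right, br_skew, br_jacobi⟩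
end
end

section
/- Let W be a gl̃_∞-module of level ℓ such that for every m ∈ Z and w ∈ W, E_{m,m+n} w = 0 for all but finitely many n ∈ Z. Define operators B̄(m,-k-1) = Σ_{n∈Z} ((-n)^k / k!) E_{m,m+n} for k ≥ 0 and B̄(m,r) = 0 for r ≥ 0. Then these operators satisfy the defining relations of gl̃ᵉ_∞ at level ℓ; i.e., setting B̄(m,x) = Σ_n B̄(m,n) x^{-n-1} = Σ_{n∈Z} E_{m,m+n} e^{-nx}, one has [B̄(m,x₁), B̄(n,x₂)] = e^{(m-n)(x₁-x₂)}(B̄(m,x₂) - B̄(n,x₁) + f(m,n)ℓ), making W a restricted gl̃ᵉ_∞-module of level ℓ. -/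
noncomputable section

/-- Given operators `Eop m n` (the action of `E_{m,n}`), the operator
`B̄(m,-p-1) = Σ_{j∈ℤ} ((-j)^p / p!) E_{m,m+j}`, i.e. the coefficient of `x^p` in
`B̄(m,x) = Σ_{j∈ℤ} E_{m,m+j} e^{-jx}`.  (The operators `B̄(m,r)` with `r ≥ 0` are zero.) -/
def Cop {W : Type*} [AddCommGroup W] [Module ℂ W]
    (Eop : ℤ → ℤ → Module.End ℂ W) (m : ℤ) (p : ℕ) (w : W) : W :=
  ∑ᶠ j : ℤ, ((-(j : ℂ)) ^ p / p.factorial) • Eop m (m + j) w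

/-!
Expand `B̄(m,x₁)` and `B̄(n,x₂)` in the `E_{m,m+i}` and `E_{n,n+j}`; the restrictedness hypothesis
makes every sum finite, so the commutator is the double sum of `[E_{m,m+i}, E_{n,n+j}]`. The
`gl̃_∞` relation pins `i = n - m` in the first term, `j = m - n` in the second and both in the
central term. What is left are sums `Σ_j e^{-jx} E_{m,k+j}`, which equal `e^{(k-m)x} B̄(m,x)`;
on coefficients this is `(a + b)^q / q! = Σ_i a^i/i! · b^(q-i)/(q-i)!`.
-/

open Function

theorem add_pow_div_factorial {K : Type*} [Field K] [CharZero K] (a b : K) (n : ℕ) :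
    (a + b) ^ n / n.factorial
      = ∑ k ∈ Finset.range (n + 1), a ^ k / k.factorial * (b ^ (n - k) / (n - k).factorial) := by
  rw [add_pow, Finset.sum_div]
  refine Finset.sum_congr rfl fun k hk => ?_
  have hkn : k ≤ n := Nat.lt_succ_iff.mp (Finset.mem_range.mp hk)
  have hchoose : (n.choose k : K) ≠ 0 := by exact_mod_cast (Nat.choose_pos hkn).ne'
  rw [← Nat.choose_mul_factorial_mul_factorial hkn]
  push_cast
  field_simp

theorem finsum_smul_add_ite {ι R M : Type*} [DecidableEq ι] [Semiring R] [AddCommMonoid M]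
    [Module R M] (c : ι → R) {g : ι → M} (hg : (support g).Finite) (a : ι) (y : M) :
    ∑ᶠ i, c i • (g i + if i = a then y else 0) = ∑ᶠ i, c i • g i + c a • y := by
  have hsingle : ∑ᶠ i, c i • (if i = a then y else 0) = c a • y :=
    (finsum_eq_single _ a fun i hi => by rw [if_neg hi, smul_zero]).trans (by rw [if_pos rfl])
  have hcg : (support fun i => c i • g i).Finite := hg.subset (support_smul_subset_right c g)
  simp only [smul_add]
  rw [finsum_add_distrib hcg, hsingle]
  refine (Set.finite_singleton a).subset fun i hi => Set.mem_singleton_iff.mpr ?_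
  by_contra hia
  exact hi (by simp only [if_neg hia, smul_zero])

section

variable {W : Type*} [AddCommGroup W] [Module ℂ W]

def IsRestricted (Eop : ℤ → ℤ → Module.End ℂ W) : Prop :=
  ∀ (m : ℤ) (w : W), (support fun j : ℤ => Eop m (m + j) w).Finite

def SatisfiesGlInftyRelations (Eop : ℤ → ℤ → Module.End ℂ W) (ℓ : ℂ) : Prop :=
  ∀ m n r s : ℤ,
    Eop m n * Eop r s - Eop r s * Eop m n =
      (if n = r then Eop m s else 0) - (if m = s then Eop r n else 0)
        + (if m = s ∧ n = r then (f m n : ℂ) * ℓ else 0) • (1 : Module.End ℂ W)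

variable {Eop : ℤ → ℤ → Module.End ℂ W}

theorem IsRestricted.finite_support_add (hfin : IsRestricted Eop) (m k : ℤ) (w : W) :
    (support fun j : ℤ => Eop m (k + j) w).Finite :=
  ((hfin m w).image (· + (m - k))).subset fun j hj =>
    ⟨k - m + j, by rwa [mem_support, show m + (k - m + j) = k + j by ring], by ring⟩

def copLinearMap (hfin : IsRestricted Eop) (m : ℤ) (p : ℕ) : Module.End ℂ W where
  toFun := Cop Eop m p
  map_add' v w := by
    simp only [Cop, map_add, smul_add]
    exact finsum_add_distrib ((hfin m v).subset (support_smul_subset_right _ _))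
      ((hfin m w).subset (support_smul_subset_right _ _))
  map_smul' c w := by
    simp only [Cop, map_smul, RingHom.id_apply, smul_finsum]
    exact finsum_congr fun j => smul_comm _ c _

@[simp]
theorem copLinearMap_apply (hfin : IsRestricted Eop) (m : ℤ) (p : ℕ) (w : W) :
    copLinearMap hfin m p w = Cop Eop m p w :=
  rfl

theorem Cop_map_sub_map_Cop (hfin : IsRestricted Eop) (T : Module.End ℂ W) (m : ℤ) (p : ℕ)
    (v : W) :
    Cop Eop m p (T v) - T (Cop Eop m p v)
      = ∑ᶠ i : ℤ, ((-(i : ℂ)) ^ p / p.factorial) • (Eop m (m + i) (T v) - T (Eop m (m + i) v)) := by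
  have hEv : (support fun i : ℤ => ((-(i : ℂ)) ^ p / p.factorial) • Eop m (m + i) v).Finite :=
    (hfin m v).subset (support_smul_subset_right _ _)
  have hTEv : (support fun i : ℤ => T (((-(i : ℂ)) ^ p / p.factorial) • Eop m (m + i) v)).Finite :=
    hEv.subset (support_comp_subset (map_zero T) _)
  have hETv : (support fun i : ℤ => ((-(i : ℂ)) ^ p / p.factorial) • Eop m (m + i) (T v)).Finite :=
    (hfin m (T v)).subset (support_smul_subset_right _ _)
  rw [Cop, Cop, map_finsum T hEv, ← finsum_sub_distrib hETv hTEv]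
  simp only [map_smul, smul_sub]

/-- Coefficientwise form of `e^{-(j-d)x} = e^{dx} e^{-jx}` with `d = k - m`. -/
theorem finsum_smul_Eop_add_eq_sum_Cop (hfin : IsRestricted Eop) (m k : ℤ) (q : ℕ) (w : W) :
    ∑ᶠ j : ℤ, ((-(j : ℂ)) ^ q / q.factorial) • Eop m (k + j) w
      = ∑ i ∈ Finset.range (q + 1), (((k : ℂ) - m) ^ i / i.factorial) • Cop Eop m (q - i) w := by
  rw [← finsum_comp_equiv (Equiv.subRight (k - m))]
  have hterm : ∀ j : ℤ,
      ((-((j - (k - m) : ℤ) : ℂ)) ^ q / q.factorial) • Eop m (k + (j - (k - m))) w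
        = ∑ i ∈ Finset.range (q + 1), (((k : ℂ) - m) ^ i / i.factorial) •
            (((-(j : ℂ)) ^ (q - i) / (q - i).factorial) • Eop m (m + j) w) := by
    intro j
    rw [show k + (j - (k - m)) = m + j by ring,
      show -((j - (k - m) : ℤ) : ℂ) = ((k : ℂ) - m) + -(j : ℂ) by push_cast; ring,
      add_pow_div_factorial, Finset.sum_smul]
    simp only [mul_smul]
  simp only [Equiv.subRight_apply, hterm]
  rw [finsum_sum_comm _ _ fun i _ => ?_]
  · simp only [← smul_finsum]
    rfl
  · exact ((hfin m w).subset (support_smul_subset_right _ _)).subset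
      (support_smul_subset_right _ _)

theorem Eop_commutator_apply {ℓ : ℂ} (hrel : SatisfiesGlInftyRelations Eop ℓ)
    (m n i j : ℤ) (w : W) :
    Eop m (m + i) (Eop n (n + j) w) - Eop n (n + j) (Eop m (m + i) w)
      = -(if j = m - n then Eop n (m + i) w else 0)
        + if i = n - m then Eop m (n + j) w + (if j = m - n then ((f m n : ℂ) * ℓ) • w else 0)
          else 0 := by
  have h := LinearMap.congr_fun (hrel m (m + i) n (n + j)) w
  simp only [LinearMap.sub_apply, LinearMap.add_apply, Module.End.mul_apply,
    LinearMap.smul_apply, Module.End.one_apply] at h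
  have hi : m + i = n ↔ i = n - m := by omega
  have hj : m = n + j ↔ j = m - n := by omega
  rw [h]
  simp only [hi, hj]
  rcases eq_or_ne i (n - m) with rfl | hi'
  · by_cases hj' : j = m - n
    · simp only [↓reduceIte, hj', add_sub_cancel, and_self]
      abel
    · simp [hj']
  · by_cases hj' : j = m - n <;> simp [hi', hj']

theorem Cop_Eop_commutator_apply {ℓ : ℂ} (hrel : SatisfiesGlInftyRelations Eop ℓ)
    (hfin : IsRestricted Eop) (m n j : ℤ) (p : ℕ) (w : W) :
    Cop Eop m p (Eop n (n + j) w) - Eop n (n + j) (Cop Eop m p w)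
      = (((m : ℂ) - n) ^ p / p.factorial) • Eop m (n + j) w
        + if j = m - n then
            ((((m : ℂ) - n) ^ p / p.factorial) * f m n * ℓ) • w
              - ∑ i ∈ Finset.range (p + 1), (((m : ℂ) - n) ^ i / i.factorial) • Cop Eop n (p - i) w
          else 0 := by
  have hfinite : (support fun i : ℤ => -(if j = m - n then Eop n (m + i) w else 0)).Finite := by
    split_ifs
    · simpa only [support_fun_neg] using hfin.finite_support_add n m w
    · simp
  simp only [Cop_map_sub_map_Cop hfin, Eop_commutator_apply hrel]
  rw [finsum_smul_add_ite _ hfinite]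
  have hcoeff : (-((n - m : ℤ) : ℂ)) ^ p / p.factorial = ((m : ℂ) - n) ^ p / p.factorial := by
    push_cast
    ring
  rw [hcoeff]
  split_ifs
  · simp only [smul_neg, finsum_neg_distrib, finsum_smul_Eop_add_eq_sum_Cop hfin]
    module
  · simp

end

/-- Let `W` be a `gl̃_∞`-module of level `ℓ` on which each `E(m,x)w` has only finitely
many nonzero coefficients.  Then the operators `B̄(m,x) = Σ_j E_{m,m+j} e^{-jx}`
satisfy the defining relations of `gl̃ᵉ_∞` at level `ℓ`:
`[B̄(m,x₁), B̄(n,x₂)] = e^{(m-n)(x₁-x₂)} (B̄(m,x₂) - B̄(n,x₁) + f(m,n) ℓ)`,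
stated coefficientwise in `x₁^p x₂^q` (`p, q ≥ 0`), making `W` a restricted
`gl̃ᵉ_∞`-module of level `ℓ`. -/
theorem transferred_gl_e_relations
    {W : Type*} [AddCommGroup W] [Module ℂ W]
    (Eop : ℤ → ℤ → Module.End ℂ W) (ℓ : ℂ)
    (hrel : ∀ m n r s : ℤ,
      Eop m n * Eop r s - Eop r s * Eop m n =
        (if n = r then Eop m s else 0) - (if m = s then Eop r n else 0)
          + (if m = s ∧ n = r then (f m n : ℂ) * ℓ else 0) • (1 : Module.End ℂ W))
    (hfin : ∀ (m : ℤ) (w : W), (Function.support fun j : ℤ => Eop m (m + j) w).Finite) :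
    ∀ (m n : ℤ) (p q : ℕ) (w : W),
      Cop Eop m p (Cop Eop n q w) - Cop Eop n q (Cop Eop m p w)
        = (((m : ℂ) - n) ^ p / p.factorial) •
            (∑ j ∈ Finset.range (q + 1),
              ((((n : ℂ) - m) ^ j / j.factorial) • Cop Eop m (q - j) w))
          - (((n : ℂ) - m) ^ q / q.factorial) •
            (∑ i ∈ Finset.range (p + 1),
              ((((m : ℂ) - n) ^ i / i.factorial) • Cop Eop n (p - i) w))
          + ((((m : ℂ) - n) ^ p / p.factorial) * (((n : ℂ) - m) ^ q / q.factorial)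
              * (f m n : ℂ) * ℓ) • w := by
  intro m n p q w
  have hswap := Cop_map_sub_map_Cop hfin (copLinearMap hfin m p) n q w
  simp only [copLinearMap_apply hfin] at hswap
  have hfinite : (support fun j : ℤ =>
      (((m : ℂ) - n) ^ p / p.factorial) • Eop m (n + j) w).Finite :=
    (IsRestricted.finite_support_add hfin m n w).subset (support_smul_subset_right _ _)
  have hcoeff : (-((m - n : ℤ) : ℂ)) ^ q / q.factorial = ((n : ℂ) - m) ^ q / q.factorial := by
    push_cast
    ring
  rw [← neg_sub, hswap, ← finsum_neg_distrib]
  simp only [← smul_neg, neg_sub, Cop_Eop_commutator_apply hrel hfin]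
  rw [finsum_smul_add_ite _ hfinite, hcoeff]
  simp only [smul_comm _ (((m : ℂ) - n) ^ p / p.factorial), ← smul_finsum,
    finsum_smul_Eop_add_eq_sum_Cop hfin]
  module
end
end

section
/- Let W be a gl̃_∞-module in category C_fin of level ℓ, regarded as a gl̃ᵉ_∞-module via B(m,x) = E(m,e^x). If W is irreducible as a gl̃_∞-module, then W is irreducible as a gl̃ᵉ_∞-module. In particular, for each m ∈ Z and w ∈ W, each vector E_{m,m+n}w (n ∈ Z) lies in the span of the vectors B̄(m,-k-1)w = Σ_{j∈Z}((-j)^k/k!)E_{m,m+j}w for k ≥ 0. -/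
/-!
Each `E_{m,m+n} w` is recovered from the vectors `B̄(m,-k-1) w`, which are (up to `k!`) the power
sums `Σⱼ (-j)^k E_{m,m+j} w` of a finitely supported family, by Lagrange interpolation at the
distinct nodes `-j`. Hence a subspace stable under the `B̄` is stable under every `E_{m,n}`.
-/

noncomputable section

section PowerSums

variable {K M ι : Type*} [Field K] [AddCommGroup M] [Module K M]

theorem sum_eval_smul_mem_span_finsum_pow_smul {v : ι → M} {s : Finset ι}
    (hs : Function.support v ⊆ s) (a : ι → K) (P : Polynomial K) :
    ∑ j ∈ s, P.eval (a j) • v j ∈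
      Submodule.span K (Set.range fun p : ℕ => ∑ᶠ j, a j ^ p • v j) := by
  induction P using Polynomial.induction_on' with
  | add P Q hP hQ =>
    simpa only [Polynomial.eval_add, add_smul, Finset.sum_add_distrib] using add_mem hP hQ
  | monomial n c =>
    have hsupp : Function.support (fun j => a j ^ n • v j) ⊆ s :=
      (Function.support_smul_subset_right (fun j => a j ^ n) v).trans hs
    have hpow : ∑ j ∈ s, a j ^ n • v j = ∑ᶠ j, a j ^ n • v j :=
      (finsum_eq_finsetSum_of_support_subset _ hsupp).symm
    simp only [Polynomial.eval_monomial, mul_smul, ← Finset.smul_sum, hpow]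
    exact Submodule.smul_mem _ _ (Submodule.subset_span ⟨n, rfl⟩)

theorem mem_span_range_finsum_pow_smul {v : ι → M} (hv : (Function.support v).Finite)
    {a : ι → K} (ha : Set.InjOn a (Function.support v)) (i : ι) :
    v i ∈ Submodule.span K (Set.range fun p : ℕ => ∑ᶠ j, a j ^ p • v j) := by
  classical
  by_cases hi : v i = 0
  · simp [hi]
  set s := hv.toFinset
  have hs : Function.support v ⊆ s := by simp [s]
  have his : i ∈ s := by simpa [s] using hi
  have has : Set.InjOn a s := by simpa [s] using ha
  have hLagrange : ∑ j ∈ s, (Lagrange.basis s a i).eval (a j) • v j = v i := by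
    refine (Finset.sum_eq_single_of_mem i his fun j hj hji => ?_).trans ?_
    · rw [Lagrange.eval_basis_of_ne hji.symm hj, zero_smul]
    · rw [Lagrange.eval_basis_self has his, one_smul]
  exact hLagrange ▸ sum_eval_smul_mem_span_finsum_pow_smul hs a _

end PowerSums

section Cop

variable {W : Type*} [AddCommGroup W] [Module ℂ W]

theorem Cop_eq_inv_factorial_smul_finsum (Eop : ℤ → ℤ → Module.End ℂ W) (m : ℤ) (k : ℕ)
    (w : W) :
    Cop Eop m k w = ((k.factorial : ℂ)⁻¹) • ∑ᶠ j : ℤ, (-(j : ℂ)) ^ k • Eop m (m + j) w := by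
  simp only [Cop, smul_finsum, smul_smul, div_eq_inv_mul]

theorem Eop_mem_span_range_Cop (Eop : ℤ → ℤ → Module.End ℂ W) {m : ℤ} {w : W}
    (hfin : (Function.support fun j : ℤ => Eop m (m + j) w).Finite) (n : ℤ) :
    Eop m (m + n) w ∈ Submodule.span ℂ (Set.range fun k : ℕ => Cop Eop m k w) := by
  have hinj : Set.InjOn (fun j : ℤ => -(j : ℂ)) (Function.support fun j => Eop m (m + j) w) :=
    fun a _ b _ hab => by simpa using hab
  refine Submodule.span_le.mpr ?_ (mem_span_range_finsum_pow_smul hfin hinj n)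
  rintro _ ⟨k, rfl⟩
  have hfac : (k.factorial : ℂ) ≠ 0 := Nat.cast_ne_zero.mpr k.factorial_ne_zero
  have hpow : ∑ᶠ j : ℤ, (-(j : ℂ)) ^ k • Eop m (m + j) w = (k.factorial : ℂ) • Cop Eop m k w := by
    rw [Cop_eq_inv_factorial_smul_finsum, smul_smul, mul_inv_cancel₀ hfac, one_smul]
  simp only [SetLike.mem_coe, hpow]
  exact Submodule.smul_mem _ _ (Submodule.subset_span ⟨k, rfl⟩)

end Cop

theorem irreducibility_transfer_general
    {W : Type*} [AddCommGroup W] [Module ℂ W]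
    (Eop : ℤ → ℤ → Module.End ℂ W)
    (hfin : ∀ (m : ℤ) (w : W), (Function.support fun j : ℤ => Eop m (m + j) w).Finite)
    (hirr : ∀ p : Submodule ℂ W, (∀ m n : ℤ, ∀ x ∈ p, Eop m n x ∈ p) → p = ⊥ ∨ p = ⊤) :
    (∀ p : Submodule ℂ W,
        (∀ (m : ℤ) (k : ℕ), ∀ x ∈ p, Cop Eop m k x ∈ p) → p = ⊥ ∨ p = ⊤) ∧
    (∀ (m : ℤ) (w : W) (n : ℤ),
        Eop m (m + n) w ∈ Submodule.span ℂ (Set.range fun k : ℕ => Cop Eop m k w)) := by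
  refine ⟨fun p hp => hirr p fun m n x hx => ?_,
    fun m w => Eop_mem_span_range_Cop Eop (hfin m w)⟩
  have hmem := Eop_mem_span_range_Cop Eop (hfin m x) (n - m)
  rw [add_sub_cancel] at hmem
  refine Submodule.span_le.mpr ?_ hmem
  rintro _ ⟨k, rfl⟩
  exact hp m k x hx

/-- Let `W` be a level-`ℓ` `gl̃_∞`-module in category `C_fin` (each `E(m,x)w` has only
finitely many nonzero coefficients), regarded as a `gl̃ᵉ_∞`-module via
`B(m,x) = E(m,e^x)`, i.e. via the operators `B̄(m,-k-1) = Σ_j ((-j)^k/k!) E_{m,m+j}`.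
If `W` is irreducible as a `gl̃_∞`-module, then it is irreducible as a
`gl̃ᵉ_∞`-module; in particular every `E_{m,m+n} w` lies in the span of the vectors
`B̄(m,-k-1) w`, `k ≥ 0`. -/
theorem irreducibility_transfer
    {W : Type*} [AddCommGroup W] [Module ℂ W] [Nontrivial W]
    (Eop : ℤ → ℤ → Module.End ℂ W) (ℓ : ℂ)
    (hrel : ∀ m n r s : ℤ,
      Eop m n * Eop r s - Eop r s * Eop m n =
        (if n = r then Eop m s else 0) - (if m = s then Eop r n else 0)
          + (if m = s ∧ n = r then (f m n : ℂ) * ℓ else 0) • (1 : Module.End ℂ W))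
    (hfin : ∀ (m : ℤ) (w : W), (Function.support fun j : ℤ => Eop m (m + j) w).Finite)
    (hirr : ∀ p : Submodule ℂ W, (∀ m n : ℤ, ∀ x ∈ p, Eop m n x ∈ p) → p = ⊥ ∨ p = ⊤) :
    (∀ p : Submodule ℂ W,
        (∀ (m : ℤ) (k : ℕ), ∀ x ∈ p, Cop Eop m k x ∈ p) → p = ⊥ ∨ p = ⊤) ∧
    (∀ (m : ℤ) (w : W) (n : ℤ),
        Eop m (m + n) w ∈ Submodule.span ℂ (Set.range fun k : ℕ => Cop Eop m k w)) :=
  irreducibility_transfer_general Eop hfin hirr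
end
end

section
/- The polynomial algebra C[x_n | n ∈ Z], as a gl_∞-module with E_{m,n} acting as x_m ∂/∂x_n, decomposes as the direct sum of its homogeneous components A_r (r ≥ 0, spanned by monomials of total degree r), each A_r is a gl_∞-submodule, and each A_r is an irreducible gl_∞-module. -/
noncomputable section

open MvPolynomial

/-- The action of `E_{i,j} = x_i ∂/∂x_j` on the polynomial algebra `ℂ[x_n | n ∈ ℤ]`. -/
def op (i j : ℤ) (p : MvPolynomial ℤ ℂ) : MvPolynomial ℤ ℂ :=
  X i * pderiv j p

/-!
Each `E_{j,j}` acts on monomials diagonally, with eigenvalue the exponent of `x_j`; in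
characteristic zero, subtracting eigenvalue multiples separates the monomials of any element, so
an invariant subspace contains every monomial occurring in one of its elements. On the other
hand `E_{i,j}` sends `x^f x_j` to a nonzero multiple of `x^f x_i`, and such exchanges of one
variable for another connect any two monomials of the same degree. So a nonzero invariant
subspace of `A_r` contains a monomial, and then all monomials of degree `r`.
-/

namespace Finsupp

variable {σ : Type*}

theorem exists_eq_add_single_of_degree_eq_succ {d : σ →₀ ℕ} {n : ℕ} (hd : d.degree = n + 1) :
    ∃ j f, d = f + single j 1 ∧ f.degree = n := by
  obtain ⟨j, hj⟩ : d.support.Nonempty := by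
    rw [support_nonempty_iff, Ne, ← degree_eq_zero_iff, hd]
    exact n.succ_ne_zero
  have hdj : single j 1 ≤ d :=
    single_le_iff.mpr (Nat.one_le_iff_ne_zero.mpr (mem_support_iff.mp hj))
  refine ⟨j, d - single j 1, (tsub_add_cancel_of_le hdj).symm, ?_⟩
  have := congrArg degree (tsub_add_cancel_of_le hdj)
  rw [map_add, degree_single] at this
  omega

theorem of_degree_eq_of_exchange {P : (σ →₀ ℕ) → Prop}
    (exchange : ∀ f i j, P (f + single j 1) → P (f + single i 1))
    {d e : σ →₀ ℕ} (hde : d.degree = e.degree) (hd : P d) : P e := by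
  induction hn : d.degree generalizing P d e with
  | zero =>
    rw [hn, eq_comm, degree_eq_zero_iff] at hde
    rwa [(degree_eq_zero_iff d).mp hn, ← hde] at hd
  | succ n ih =>
    obtain ⟨j, d', rfl, hd'⟩ := exists_eq_add_single_of_degree_eq_succ hn
    obtain ⟨i, e', rfl, he'⟩ := exists_eq_add_single_of_degree_eq_succ (hde ▸ hn)
    -- trade the unit `x_j` of `d` for the unit `x_i` of `e`, then compare `d'` and `e'` with
    -- `single i 1` added to both
    refine ih (P := fun f => P (f + single i 1)) (fun f k l h => ?_) (hd'.trans he'.symm)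
      (exchange d' i j hd) hd'
    rw [add_right_comm] at h ⊢
    exact exchange _ k l h

end Finsupp

namespace MvPolynomial

open Finsupp

variable {σ R : Type*} [CommSemiring R]

theorem X_mul_pderiv_monomial_add_single (i j : σ) (f : σ →₀ ℕ) (c : R) :
    X i * pderiv j (monomial (f + single j 1) c) = monomial (f + single i 1) (c * (f j + 1)) := by
  rw [pderiv_monomial, add_tsub_cancel_right, X, monomial_mul, one_mul, add_comm (single i 1)]
  simp

theorem IsHomogeneous.X_mul_pderiv {p : MvPolynomial σ R} {n : ℕ} (hp : p.IsHomogeneous n)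
    (i j : σ) : (X i * pderiv j p).IsHomogeneous n := by
  obtain _ | n := n
  · rw [← totalDegree_zero_iff_isHomogeneous, totalDegree_eq_zero_iff_eq_C] at hp
    rw [hp, pderiv_C, mul_zero]
    exact isHomogeneous_zero _ _ _
  · simpa [add_comm] using (isHomogeneous_X R i).mul hp.pderiv

theorem coeff_X_mul_pderiv_self (j : σ) (p : MvPolynomial σ R) (e : σ →₀ ℕ) :
    coeff e (X j * pderiv j p) = e j * coeff e p := by
  induction p using MvPolynomial.induction_on' with
  | monomial d c =>
    classical
    rw [X_mul_pderiv_monomial, coeff_smul, coeff_monomial]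
    split_ifs with h
    · rw [h, nsmul_eq_mul]
    · simp
  | add p q hp hq => rw [map_add, mul_add, coeff_add, hp, hq, coeff_add, mul_add]

theorem homogeneousSubmodule_le_of_monomial_one_mem {q : Submodule R (MvPolynomial σ R)} {n : ℕ}
    (hq : ∀ d : σ →₀ ℕ, d.degree = n → monomial d 1 ∈ q) : homogeneousSubmodule σ R n ≤ q := by
  rw [homogeneousSubmodule_eq_finsupp_supported, AddMonoidAlgebra.supported_eq_span_single,
    Submodule.span_le]
  rintro _ ⟨d, hd, rfl⟩
  exact hq d hd

theorem homogeneousSubmodule_ne_bot [Nonempty σ] [Nontrivial R] (n : ℕ) :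
    homogeneousSubmodule σ R n ≠ ⊥ := by
  obtain ⟨i⟩ := ‹Nonempty σ›
  refine Submodule.ne_bot_iff _ |>.mpr ⟨monomial (single i n) 1, ?_, ?_⟩
  · exact isHomogeneous_monomial _ (degree_single i n)
  · exact monomial_eq_zero.not.mpr one_ne_zero

section Field

variable {K : Type*} [Field K] [CharZero K] {q : Submodule K (MvPolynomial σ K)}

theorem exists_mem_separating_support (hq : ∀ j, ∀ p ∈ q, X j * pderiv j p ∈ q)
    {p : MvPolynomial σ K} (hp : p ∈ q) {d d' : σ →₀ ℕ} (hd : d ∈ p.support) (hne : d' ≠ d) :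
    ∃ p' ∈ q, d ∈ p'.support ∧ d' ∉ p'.support ∧ p'.support ⊆ p.support := by
  obtain ⟨j, hj⟩ := DFunLike.ne_iff.mp hne
  have hcoeff (e : σ →₀ ℕ) :
      coeff e (X j * pderiv j p - (d' j : K) • p) = (e j - d' j) * coeff e p := by
    rw [coeff_sub, coeff_X_mul_pderiv_self, coeff_smul, smul_eq_mul, sub_mul]
  refine ⟨_, q.sub_mem (hq j p hp) (q.smul_mem (d' j : K) hp), ?_, ?_, fun e he => ?_⟩
  · rw [mem_support_iff, hcoeff]
    exact mul_ne_zero (sub_ne_zero.mpr (Nat.cast_injective.ne (Ne.symm hj)))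
      (mem_support_iff.mp hd)
  · rw [mem_support_iff, hcoeff, sub_self, zero_mul, not_not]
  · rw [mem_support_iff, hcoeff] at he
    exact mem_support_iff.mpr (right_ne_zero_of_mul he)

theorem monomial_one_mem_of_mem_support (hq : ∀ j, ∀ p ∈ q, X j * pderiv j p ∈ q)
    {p : MvPolynomial σ K} (hp : p ∈ q) {d : σ →₀ ℕ} (hd : d ∈ p.support) :
    monomial d 1 ∈ q := by
  induction hn : p.support.card using Nat.strong_induction_on generalizing p with
  | _ n ih =>
    obtain hsupp | hnontriv := Finset.eq_singleton_or_nontrivial hd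
    · have hpd : p = monomial d (coeff d p) := by
        conv_lhs => rw [p.as_sum, hsupp, Finset.sum_singleton]
      have := q.smul_mem (coeff d p)⁻¹ hp
      rwa [hpd, smul_monomial, smul_eq_mul, ← hpd, inv_mul_cancel₀ (mem_support_iff.mp hd)] at this
    · obtain ⟨d', hd', hne⟩ := hnontriv.exists_ne d
      obtain ⟨p', hp', hdp', hd'p', hsub⟩ := exists_mem_separating_support hq hp hd hne
      have hlt : p'.support.card < n :=
        hn ▸ Finset.card_lt_card ((Finset.ssubset_iff_of_subset hsub).mpr ⟨d', hd', hd'p'⟩)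
      exact ih _ hlt hp' hdp' rfl

theorem monomial_one_mem_of_exchange (hq : ∀ i j, ∀ p ∈ q, X i * pderiv j p ∈ q)
    (f : σ →₀ ℕ) (i j : σ) (h : monomial (f + single j 1) 1 ∈ q) :
    monomial (f + single i 1) 1 ∈ q := by
  have := q.smul_mem ((f j : K) + 1)⁻¹ (hq i j _ h)
  rwa [X_mul_pderiv_monomial_add_single, smul_monomial, smul_eq_mul, one_mul,
    inv_mul_cancel₀ (Nat.cast_add_one_ne_zero _)] at this

theorem eq_bot_or_eq_homogeneousSubmodule {n : ℕ} (hle : q ≤ homogeneousSubmodule σ K n)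
    (hq : ∀ i j, ∀ p ∈ q, X i * pderiv j p ∈ q) : q = ⊥ ∨ q = homogeneousSubmodule σ K n := by
  refine or_iff_not_imp_left.mpr fun hbot => le_antisymm hle ?_
  obtain ⟨p, hp, hp0⟩ := Submodule.exists_mem_ne_zero_of_ne_bot hbot
  obtain ⟨d, hd⟩ := support_nonempty.mpr hp0
  have hdeg : d.degree = n := by
    by_contra h
    exact mem_support_iff.mp hd ((hle hp).coeff_eq_zero h)
  refine homogeneousSubmodule_le_of_monomial_one_mem fun e he => ?_
  exact of_degree_eq_of_exchange (P := fun d => monomial d (1 : K) ∈ q)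
    (monomial_one_mem_of_exchange hq) (hdeg.trans he.symm)
    (monomial_one_mem_of_mem_support (fun j => hq j j) hp hd)

end Field

end MvPolynomial

/-- The polynomial algebra `ℂ[x_n | n ∈ ℤ]`, as a `gl_∞`-module via
`E_{m,n} ↦ x_m ∂/∂x_n`, is the direct sum of its homogeneous components
`A_r` (`r ≥ 0`), each `A_r` is a `gl_∞`-submodule, and each `A_r` is an
irreducible `gl_∞`-module. -/
theorem symmetric_algebra_decomposition :
    DirectSum.IsInternal (fun r : ℕ => homogeneousSubmodule ℤ ℂ r) ∧
    (∀ (r : ℕ) (i j : ℤ), ∀ p ∈ homogeneousSubmodule ℤ ℂ r,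
      op i j p ∈ homogeneousSubmodule ℤ ℂ r) ∧
    (∀ r : ℕ, homogeneousSubmodule ℤ ℂ r ≠ ⊥ ∧
      ∀ q : Submodule ℂ (MvPolynomial ℤ ℂ), q ≤ homogeneousSubmodule ℤ ℂ r →
        (∀ i j : ℤ, ∀ p ∈ q, op i j p ∈ q) →
        q = ⊥ ∨ q = homogeneousSubmodule ℤ ℂ r) :=
  ⟨decomposition.isInternal, fun _ i j _ hp => IsHomogeneous.X_mul_pderiv hp i j,
    fun r => ⟨homogeneousSubmodule_ne_bot r, fun _ => eq_bot_or_eq_homogeneousSubmodule⟩⟩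
end
end
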